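/- Let θ_i, θ_r ∈ [0, π/2) with θ_i ≠ θ_r, k > 0, η0 > 0, set Ψ(y) = exp(−i k(sin θ_r − sin θ_i) y), R = √(cos θ_i/cos θ_r), and Z3(y) = (η0/√(cos θ_i cos θ_r))·(√(cos θ_r) + √(cos θ_i) Ψ(y))/(√(cos θ_i) − √(cos θ_r) Ψ(y)). Then for every y ∈ ℝ: (i) √(cos θ_i) − √(cos θ_r) Ψ(y) ≠ 0, so Z3(y) is well defined; (ii) R² cos θ_r = cos θ_i (power-flux conservation); and (iii) the fields E(y) = A0 exp(−i k sin θ_i · y)(1 + R·Ψ(y)) and H(y) = (A0/η0) exp(−i k sin θ_i · y)(−cos θ_i + cos θ_r R Ψ(y)) satisfy E(y) = −Z3(y)·H(y), for any A0 ∈ ℂ. That is, the globally-optimal impedance exactly supports power-conserving anomalous reflection towards θ_r. -/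

import Mathlib

/-!
Write `a = √(cos θi)` and `b = √(cos θr)`, so that `R = a / b`. Since `Ψ` is unimodular and
`a ≠ b`, the denominator `a - b Ψ` of `Z3` never vanishes. In the boundary condition the
magnetic-field factor `-a² + b² R Ψ = -a (a - b Ψ)` cancels that denominator, and what is left,
`(b + a Ψ) / b = 1 + R Ψ`, is exactly the electric-field factor.
-/

open Real

theorem cos_pos_of_mem_Ico {θ : ℝ} (hθ : θ ∈ Set.Ico 0 (π / 2)) : 0 < cos θ :=
  cos_pos_of_mem_Ioo ⟨by linarith [hθ.1, pi_pos], hθ.2⟩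

theorem sqrt_cos_ne_of_mem_Ico {θ θ' : ℝ} (hθ : θ ∈ Set.Ico 0 (π / 2))
    (hθ' : θ' ∈ Set.Ico 0 (π / 2)) (hne : θ ≠ θ') : √(cos θ) ≠ √(cos θ') := by
  have hsub : Set.Ico 0 (π / 2) ⊆ Set.Icc 0 π :=
    Set.Ico_subset_Icc_self.trans (Set.Icc_subset_Icc_right (by linarith [pi_pos]))
  intro h
  rw [sqrt_inj (cos_pos_of_mem_Ico hθ).le (cos_pos_of_mem_Ico hθ').le] at h
  exact hne (injOn_cos (hsub hθ) (hsub hθ') h)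

theorem Complex.norm_exp_neg_I_mul_ofReal (x : ℝ) : ‖Complex.exp (-Complex.I * x)‖ = 1 := by
  rw [neg_mul, ← mul_neg, mul_comm, ← Complex.ofReal_neg, Complex.norm_exp_ofReal_mul_I]

theorem sub_mul_ne_zero_of_norm_ne {𝕜 : Type*} [NormedDivisionRing 𝕜] {a b u : 𝕜} (hab : ‖a‖ ≠ ‖b‖) (hu : ‖u‖ = 1) :
    a - b * u ≠ 0 := by
  intro h
  apply hab
  rw [sub_eq_zero.mp h, norm_mul, hu, mul_one]

theorem sq_sqrt_div_mul {c d : ℝ} (hc : 0 < c) (hd : 0 ≤ d) : √(d / c) ^ 2 * c = d := by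
  rw [sq_sqrt (div_nonneg hd hc.le), div_mul_cancel₀ d hc.ne']

theorem impedance_boundary_identity {K : Type*} [Field K] {a b η : K} (P A : K) (ha : a ≠ 0) (hb : b ≠ 0)
    (hη : η ≠ 0) (hden : a - b * P ≠ 0) :
    A * (1 + a / b * P) =
      -(η / (a * b) * (b + a * P) / (a - b * P)) * (A / η * (-a ^ 2 + b ^ 2 * (a / b) * P)) := by
  field_simp
  ring

theorem stmt_16_general (θi θr k η0 : ℝ)
    (hθi : θi ∈ Set.Ico 0 (π / 2)) (hθr : θr ∈ Set.Ico 0 (π / 2))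
    (hne : θi ≠ θr) (hη0 : 0 < η0)
    (Ψ : ℝ → ℂ)
    (hΨ : ∀ y : ℝ, Ψ y = Complex.exp (-Complex.I * ((k * (Real.sin θr - Real.sin θi) * y : ℝ) : ℂ)))
    (R : ℝ) (hR : R = Real.sqrt (Real.cos θi / Real.cos θr))
    (Z3 : ℝ → ℂ)
    (hZ3 : ∀ y : ℝ, Z3 y =
      ((η0 / Real.sqrt (Real.cos θi * Real.cos θr) : ℝ) : ℂ) *
        (((Real.sqrt (Real.cos θr) : ℝ) : ℂ) + ((Real.sqrt (Real.cos θi) : ℝ) : ℂ) * Ψ y) /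
        (((Real.sqrt (Real.cos θi) : ℝ) : ℂ) - ((Real.sqrt (Real.cos θr) : ℝ) : ℂ) * Ψ y)) :
    ∀ y : ℝ,
      (((Real.sqrt (Real.cos θi) : ℝ) : ℂ) - ((Real.sqrt (Real.cos θr) : ℝ) : ℂ) * Ψ y ≠ 0) ∧
      (R ^ 2 * Real.cos θr = Real.cos θi) ∧
      (∀ A0 : ℂ,
        A0 * Complex.exp (-Complex.I * ((k * Real.sin θi * y : ℝ) : ℂ)) * (1 + (R : ℂ) * Ψ y)
          = -Z3 y * ((A0 / (η0 : ℂ)) * Complex.exp (-Complex.I * ((k * Real.sin θi * y : ℝ) : ℂ)) *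
            (-((Real.cos θi : ℝ) : ℂ) + ((Real.cos θr : ℝ) : ℂ) * (R : ℂ) * Ψ y))) := by
  intro y
  have hci := cos_pos_of_mem_Ico hθi
  have hcr := cos_pos_of_mem_Ico hθr
  have hden : ((√(cos θi) : ℝ) : ℂ) - ((√(cos θr) : ℝ) : ℂ) * Ψ y ≠ 0 := by
    refine sub_mul_ne_zero_of_norm_ne ?_ (hΨ y ▸ Complex.norm_exp_neg_I_mul_ofReal _)
    simpa only [Complex.norm_real, norm_eq_abs, abs_of_nonneg (sqrt_nonneg _)]
      using sqrt_cos_ne_of_mem_Ico hθi hθr hne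
  refine ⟨hden, hR ▸ sq_sqrt_div_mul hcr hci.le, fun A0 => ?_⟩
  have hRab : (R : ℂ) = (√(cos θi) : ℂ) / (√(cos θr) : ℂ) := by
    rw [hR, sqrt_div hci.le, Complex.ofReal_div]
  have hcos (θ : ℝ) (h : 0 < cos θ) : (cos θ : ℂ) = (√(cos θ) : ℂ) ^ 2 := by
    exact_mod_cast (sq_sqrt h.le).symm
  set E := Complex.exp (-Complex.I * ((k * sin θi * y : ℝ) : ℂ))
  rw [hZ3 y, hRab, hcos θi hci, hcos θr hcr, sqrt_mul hci.le, Complex.ofReal_div,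
    Complex.ofReal_mul]
  linear_combination impedance_boundary_identity (Ψ y) (A0 * E)
    (Complex.ofReal_ne_zero.mpr (sqrt_pos.mpr hci).ne')
    (Complex.ofReal_ne_zero.mpr (sqrt_pos.mpr hcr).ne')
    (Complex.ofReal_ne_zero.mpr hη0.ne') hden

/-- The globally-optimal impedance Z3 is well defined, its
reflection coefficient R conserves the normal power flux, and it exactly
supports power-conserving anomalous reflection towards θ_r. -/
theorem stmt_16 (θi θr k η0 : ℝ)
    (hθi : θi ∈ Set.Ico 0 (π / 2)) (hθr : θr ∈ Set.Ico 0 (π / 2))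
    (hne : θi ≠ θr) (hk : 0 < k) (hη0 : 0 < η0)
    (Ψ : ℝ → ℂ)
    (hΨ : ∀ y : ℝ, Ψ y = Complex.exp (-Complex.I * ((k * (Real.sin θr - Real.sin θi) * y : ℝ) : ℂ)))
    (R : ℝ) (hR : R = Real.sqrt (Real.cos θi / Real.cos θr))
    (Z3 : ℝ → ℂ)
    (hZ3 : ∀ y : ℝ, Z3 y =
      ((η0 / Real.sqrt (Real.cos θi * Real.cos θr) : ℝ) : ℂ) *
        (((Real.sqrt (Real.cos θr) : ℝ) : ℂ) + ((Real.sqrt (Real.cos θi) : ℝ) : ℂ) * Ψ y) /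
        (((Real.sqrt (Real.cos θi) : ℝ) : ℂ) - ((Real.sqrt (Real.cos θr) : ℝ) : ℂ) * Ψ y)) :
    ∀ y : ℝ,
      (((Real.sqrt (Real.cos θi) : ℝ) : ℂ) - ((Real.sqrt (Real.cos θr) : ℝ) : ℂ) * Ψ y ≠ 0) ∧
      (R ^ 2 * Real.cos θr = Real.cos θi) ∧
      (∀ A0 : ℂ,
        A0 * Complex.exp (-Complex.I * ((k * Real.sin θi * y : ℝ) : ℂ)) * (1 + (R : ℂ) * Ψ y)
          = -Z3 y * ((A0 / (η0 : ℂ)) * Complex.exp (-Complex.I * ((k * Real.sin θi * y : ℝ) : ℂ)) *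
            (-((Real.cos θi : ℝ) : ℂ) + ((Real.cos θr : ℝ) : ℂ) * (R : ℂ) * Ψ y))) :=
  stmt_16_general θi θr k η0 hθi hθr hne hη0 Ψ hΨ R hR Z3 hZ3
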